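/- arXiv:1910.05557 — 4 statements merged into one kernel-verified Lean document; each statement's English description precedes it below -/
import Mathlib

section
/- Let q be an odd prime power, d divisible by 4, and E ⊂ F_q^d. If |E| > (q^{d-1}/d) · C(d, d/2) · C(d/2, d/4), then for every even r with 0 < r < d there exist x, y ∈ E with Hamming distance |x - y| = r. -/
/-!
Fix a set `T` of `r` coordinates. Two points that agree off `T` and differ everywhere on `T` are
at distance exactly `r`, so if `E` avoids distance `r`, then within a fibre of the restriction to
`Tᶜ` the restrictions to `T` all meet a fixed one in some coordinate. Hence
`|E| ≤ q ^ (d - r) (q ^ r - (q - 1) ^ r) ≤ r q ^ (d - 1) ≤ (d - 1) q ^ (d - 1)`, and this is at most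
the stated bound because `d (d - 1) = 2 C(d, 2) ≤ C(d, d/2) C(d/2, d/4)`.
-/

open Finset

lemma Nat.pow_sub_pred_pow_le (q r : ℕ) : q ^ r - (q - 1) ^ r ≤ r * q ^ (r - 1) := by
  rcases q with _ | q
  · simp
  have hmono : q ^ r ≤ (q + 1) ^ r := Nat.pow_le_pow_left q.le_succ r
  have h := abs_pow_sub_pow_le ((q : ℤ) + 1) (q : ℤ) r
  have hq : (0 : ℤ) ≤ q := by positivity
  rw [abs_of_nonneg (sub_nonneg.2 (pow_le_pow_left₀ hq (by linarith) r)),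
    abs_of_nonneg (a := (q : ℤ) + 1) (by positivity), abs_of_nonneg hq,
    max_eq_left (by linarith), add_sub_cancel_left, abs_one, one_mul] at h
  simp only [Nat.add_sub_cancel]
  zify [hmono]
  exact h

lemma Nat.mul_pred_le_choose_half_mul_choose_quarter {d : ℕ} (hd : 4 ≤ d) :
    d * (d - 1) ≤ d.choose (d / 2) * (d / 2).choose (d / 4) := by
  have hpair : d * (d - 1) = d.choose 2 * 2 := by
    rw [Nat.choose_two_right, Nat.div_mul_cancel (Nat.even_mul_pred_self d).two_dvd]
  have hquarter : 2 ≤ (d / 2).choose (d / 4) := by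
    have h := Nat.choose_le_middle 1 (d / 2)
    rw [Nat.choose_one_right, Nat.div_div_eq_div_mul] at h
    exact le_trans (by omega) h
  rw [hpair]
  exact Nat.mul_le_mul (Nat.choose_le_middle 2 d) hquarter

section Hamming

variable {ι F : Type*} [Fintype ι] [DecidableEq ι] [DecidableEq F]

lemma hammingDist_eq_card_of_eq_off_of_ne_on {T : Finset ι} {x y : ι → F}
    (hoff : ∀ i ∉ T, x i = y i) (hon : ∀ i ∈ T, x i ≠ y i) : hammingDist x y = #T := by
  unfold hammingDist
  congr 1
  ext i
  by_cases hi : i ∈ T <;> simp [hi, hon, hoff]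

lemma card_filter_exists_apply_eq {κ : Type*} [Fintype κ] [DecidableEq κ] [Fintype F]
    (a : κ → F) :
    #{g : κ → F | ∃ j, g j = a j} = Fintype.card F ^ Fintype.card κ
      - (Fintype.card F - 1) ^ Fintype.card κ := by
  have hnowhere : ({g : κ → F | ∀ j, g j ≠ a j} : Finset (κ → F))
      = Fintype.piFinset fun j => ({a j}ᶜ : Finset F) := by
    ext g
    simp [Fintype.mem_piFinset]
  have hsplit : ({g : κ → F | ∃ j, g j = a j} : Finset (κ → F))
      = univ \ ({g : κ → F | ∀ j, g j ≠ a j} : Finset (κ → F)) := by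
    rw [← filter_not]
    simp only [not_forall, not_not]
  rw [hsplit, card_sdiff_of_subset (filter_subset _ _), hnowhere, Fintype.card_piFinset]
  simp [card_compl]

lemma card_le_of_eq_off_of_forall_hammingDist_ne [Fintype F] (T : Finset ι) (S : Finset (ι → F))
    (hoff : ∀ x ∈ S, ∀ y ∈ S, ∀ i ∉ T, x i = y i)
    (hS : ∀ x ∈ S, ∀ y ∈ S, hammingDist x y ≠ #T) :
    #S ≤ Fintype.card F ^ #T - (Fintype.card F - 1) ^ #T := by
  obtain rfl | ⟨x, hx⟩ := S.eq_empty_or_nonempty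
  · simp
  let restrict : (ι → F) → (T → F) := fun y i => y i
  have hinj : Set.InjOn restrict S := by
    intro y hy z hz hyz
    funext i
    by_cases hi : i ∈ T
    · exact congrFun hyz ⟨i, hi⟩
    · exact hoff y hy z hz i hi
  have hmeets : S.image restrict ⊆ ({g : T → F | ∃ j, g j = restrict x j} : Finset _) := by
    simp only [subset_iff, mem_image, mem_filter_univ, forall_exists_index, and_imp]
    rintro _ y hy rfl
    by_contra! hne
    exact hS y hy x hx <| hammingDist_eq_card_of_eq_off_of_ne_on (hoff y hy x hx)
      fun i hi => hne ⟨i, hi⟩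
  calc #S = #(S.image restrict) := (card_image_of_injOn hinj).symm
    _ ≤ _ := card_le_card hmeets
    _ = _ := by rw [card_filter_exists_apply_eq, Fintype.card_coe]

lemma card_le_of_forall_hammingDist_ne [Fintype F] (E : Finset (ι → F)) {r : ℕ}
    (hr : r ≤ Fintype.card ι) (hE : ∀ x ∈ E, ∀ y ∈ E, hammingDist x y ≠ r) :
    #E ≤ (Fintype.card F ^ r - (Fintype.card F - 1) ^ r)
      * Fintype.card F ^ (Fintype.card ι - r) := by
  obtain ⟨T, -, rfl⟩ := exists_subset_card_eq (s := (univ : Finset ι)) hr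
  let restrict : (ι → F) → ((Tᶜ : Finset ι) → F) := fun y i => y i
  have hfibre (v) : ∀ y ∈ E.filter (restrict · = v), ∀ z ∈ E.filter (restrict · = v),
      ∀ i ∉ T, y i = z i := fun y hy z hz i hi =>
    congrFun ((mem_filter.1 hy).2.trans (mem_filter.1 hz).2.symm) ⟨i, mem_compl.2 hi⟩
  calc #E ≤ _ * #(E.image restrict) := card_le_mul_card_image E _ fun v _ =>
        card_le_of_eq_off_of_forall_hammingDist_ne T _ (hfibre v)
          fun y hy z hz => hE y (mem_filter.1 hy).1 z (mem_filter.1 hz).1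
    _ ≤ _ * Fintype.card ((Tᶜ : Finset ι) → F) := Nat.mul_le_mul_left _ (card_le_univ _)
    _ = _ := by rw [Fintype.card_fun, Fintype.card_coe, card_compl]

lemma card_le_mul_pow_of_forall_hammingDist_ne [Fintype F] (E : Finset (ι → F)) {r : ℕ}
    (hr₀ : 0 < r) (hr : r ≤ Fintype.card ι) (hE : ∀ x ∈ E, ∀ y ∈ E, hammingDist x y ≠ r) :
    #E ≤ r * Fintype.card F ^ (Fintype.card ι - 1) :=
  calc #E ≤ (Fintype.card F ^ r - (Fintype.card F - 1) ^ r)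
        * Fintype.card F ^ (Fintype.card ι - r) := card_le_of_forall_hammingDist_ne E hr hE
    _ ≤ r * Fintype.card F ^ (r - 1) * Fintype.card F ^ (Fintype.card ι - r) :=
        Nat.mul_le_mul_right _ (Nat.pow_sub_pred_pow_le _ _)
    _ = r * Fintype.card F ^ (Fintype.card ι - 1) := by
        rw [mul_assoc, ← pow_add]
        congr 2
        omega

end Hamming

theorem hamming_distances_main_general (q d : ℕ) (hd : 4 ∣ d)
    (F : Type*) [Fintype F] [DecidableEq F] (hF : Fintype.card F = q)
    (E : Finset (Fin d → F))
    (hE : ((q : ℝ) ^ (d - 1) / d) * (d.choose (d / 2) : ℝ) * ((d / 2).choose (d / 4) : ℝ)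
            < E.card) :
    ∀ r : ℕ, Even r → 0 < r → r < d →
      ∃ x ∈ E, ∃ y ∈ E, hammingDist x y = r := by
  intro r _ hr₀ hrd
  by_contra! hfree
  have hd₄ : 4 ≤ d := Nat.le_of_dvd (by omega) hd
  have hcard : #E ≤ r * q ^ (d - 1) := by
    simpa [hF] using card_le_mul_pow_of_forall_hammingDist_ne E hr₀ (by simpa using hrd.le) hfree
  have hbinom : ((d * (d - 1) : ℕ) : ℝ) ≤ d.choose (d / 2) * (d / 2).choose (d / 4) := by
    exact_mod_cast Nat.mul_pred_le_choose_half_mul_choose_quarter hd₄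
  have hd₀ : (d : ℝ) ≠ 0 := by positivity
  refine hE.not_ge ?_
  calc (#E : ℝ) ≤ r * (q : ℝ) ^ (d - 1) := by exact_mod_cast hcard
    _ ≤ (d - 1 : ℕ) * (q : ℝ) ^ (d - 1) := by gcongr; omega
    _ = (q : ℝ) ^ (d - 1) / d * ((d * (d - 1) : ℕ) : ℝ) := by push_cast; field_simp
    _ ≤ (q : ℝ) ^ (d - 1) / d * (d.choose (d / 2) * (d / 2).choose (d / 4)) := by gcongr
    _ = _ := by ring

theorem hamming_distances_main (p l q d : ℕ) [Fact p.Prime] (hp : Odd p)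
    (hq : q = p ^ l) (hl : 0 < l) (hd : 4 ∣ d)
    (F : Type*) [Field F] [Fintype F] [DecidableEq F] (hF : Fintype.card F = q)
    (E : Finset (Fin d → F))
    (hE : ((q : ℝ) ^ (d - 1) / d) * (d.choose (d / 2) : ℝ) * ((d / 2).choose (d / 4) : ℝ)
            < E.card) :
    ∀ r : ℕ, Even r → 0 < r → r < d →
      ∃ x ∈ E, ∃ y ∈ E, hammingDist x y = r :=
  hamming_distances_main_general q d hd F hF E hE
end

section
/- Let d be even and 0 ≤ i ≤ d with i even. Then for all 0 ≤ k ≤ d, the Krawtchouk polynomials with parameters d and q = 2 satisfy |K_k(i)| ≤ |K_{d/2}(i)|. -/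
open Finset

/-- The Krawtchouk polynomial with parameters `d` and `q`. -/
def krawtchouk (d q r t : ℕ) : ℤ :=
  ∑ i ∈ Finset.range (r + 1),
    (t.choose i : ℤ) * ((d - t).choose (r - i) : ℤ) * (-1) ^ i * ((q : ℤ) - 1) ^ (r - i)

open Polynomial

lemma one_sub_X_pow_coeff (i j : ℕ) :
    ((1 - X : ℂ[X]) ^ i).coeff j = (-1) ^ j * (i.choose j : ℂ) := by
  have h : (1 - X : ℂ[X]) ^ i = ∑ m ∈ range (i + 1), C ((-1) ^ m * (i.choose m : ℂ)) * X ^ m := by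
    have := add_pow (-X : ℂ[X]) 1 i
    rw [show (-X + 1 : ℂ[X]) = 1 - X by ring] at this
    rw [this]
    refine Finset.sum_congr rfl fun m hm => ?_
    rw [map_mul, map_pow, map_neg, map_one, map_natCast]
    ring
  rw [h, finset_sum_coeff]
  simp only [coeff_C_mul, coeff_X_pow]
  rcases le_or_gt j i with hj | hj
  · rw [Finset.sum_eq_single j]
    · simp
    · intro b _ hb; rw [if_neg (Ne.symm hb), mul_zero]
    · intro h'; exact absurd (Finset.mem_range.2 (Nat.lt_succ_of_le hj)) h'
  · have hz : ∀ b ∈ range (i + 1),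
        (-1 : ℂ) ^ b * (i.choose b : ℂ) * (if j = b then 1 else 0) = 0 := by
      intro b hb
      have : j ≠ b := by rw [Finset.mem_range] at hb; omega
      rw [if_neg this, mul_zero]
    rw [Finset.sum_eq_zero hz, Nat.choose_eq_zero_of_lt hj]
    simp

lemma kraw_coeff (d i k : ℕ) :
    (((1 - X) ^ i * (1 + X) ^ (d - i) : ℂ[X])).coeff k = (krawtchouk d 2 k i : ℂ) := by
  rw [coeff_mul, krawtchouk, Finset.Nat.sum_antidiagonal_eq_sum_range_succ_mk,
    Int.cast_sum]
  refine Finset.sum_congr rfl fun j hj => ?_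
  rw [one_sub_X_pow_coeff, coeff_one_add_X_pow]
  push_cast
  ring

lemma kraw_gen (d i : ℕ) (hi : i ≤ d) (x : ℂ) :
    ∑ k ∈ range (d + 1), (krawtchouk d 2 k i : ℂ) * x ^ k
      = (1 - x) ^ i * (1 + x) ^ (d - i) := by
  have hP : (((1 - X) ^ i * (1 + X) ^ (d - i) : ℂ[X])).natDegree < d + 1 := by
    refine Nat.lt_succ_of_le (le_trans (natDegree_mul_le) ?_)
    have h1 : ((1 - X : ℂ[X]) ^ i).natDegree ≤ i := by
      refine le_trans (natDegree_pow_le) ?_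
      have : (1 - X : ℂ[X]).natDegree ≤ 1 := by
        refine le_trans (natDegree_sub_le _ _) ?_; simp
      nlinarith
    have h2 : ((1 + X : ℂ[X]) ^ (d - i)).natDegree ≤ d - i := by
      refine le_trans (natDegree_pow_le) ?_
      have : (1 + X : ℂ[X]).natDegree ≤ 1 := by
        refine le_trans (natDegree_add_le _ _) ?_; simp
      nlinarith
    omega
  have heval := Polynomial.eval_eq_sum_range' hP x
  simp only [eval_mul, eval_pow, eval_sub, eval_add, eval_one, eval_X] at heval
  rw [heval]
  refine Finset.sum_congr rfl fun k _ => ?_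
  rw [kraw_coeff]

open Complex Real in
lemma root_sum (N : ℕ) (hN : N ≠ 0) (m : ℕ) :
    ∑ t ∈ range N, (Complex.exp (2 * Real.pi * Complex.I / N)) ^ (t * m)
      = if N ∣ m then (N : ℂ) else 0 := by
  set ζ := Complex.exp (2 * Real.pi * Complex.I / N) with hζ
  have prim : IsPrimitiveRoot ζ N := Complex.isPrimitiveRoot_exp N hN
  simp_rw [mul_comm, pow_mul]
  rcases em (N ∣ m) with h | h
  · rw [if_pos h, (prim.pow_eq_one_iff_dvd m).2 h]
    simp
  · rw [if_neg h]
    have hne : ζ ^ m ≠ 1 := fun hc => h ((prim.pow_eq_one_iff_dvd m).1 hc)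
    rw [geom_sum_eq hne]
    have : (ζ ^ m) ^ N = 1 := by
      rw [← pow_mul, mul_comm, pow_mul, prim.pow_eq_one, one_pow]
    rw [this, sub_self, zero_div]

open Complex Real in
lemma kraw_inv (d i k : ℕ) (hi : i ≤ d) (hk : k ≤ d) :
    ∑ t ∈ range (d + 1),
        (1 - (Complex.exp (2 * Real.pi * Complex.I / (d+1))) ^ t) ^ i
          * (1 + (Complex.exp (2 * Real.pi * Complex.I / (d+1))) ^ t) ^ (d - i)
          * (Complex.exp (2 * Real.pi * Complex.I / (d+1))) ^ (t * (d + 1 - k))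
      = ((d : ℂ) + 1) * (krawtchouk d 2 k i : ℂ) := by
  set ζ := Complex.exp (2 * Real.pi * Complex.I / (d+1)) with hζ
  have step1 : ∀ t, (1 - ζ ^ t) ^ i * (1 + ζ ^ t) ^ (d - i)
      = ∑ j ∈ range (d + 1), (krawtchouk d 2 j i : ℂ) * (ζ ^ t) ^ j := by
    intro t; rw [kraw_gen d i hi]
  calc ∑ t ∈ range (d + 1), (1 - ζ ^ t) ^ i * (1 + ζ ^ t) ^ (d - i) * ζ ^ (t * (d + 1 - k))
      = ∑ t ∈ range (d + 1), ∑ j ∈ range (d + 1),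
          (krawtchouk d 2 j i : ℂ) * ζ ^ (t * (j + (d + 1 - k))) := by
        refine Finset.sum_congr rfl fun t _ => ?_
        rw [step1 t, Finset.sum_mul]
        refine Finset.sum_congr rfl fun j _ => ?_
        rw [← pow_mul, mul_assoc, ← pow_add, Nat.left_distrib]
    _ = ∑ j ∈ range (d + 1), (krawtchouk d 2 j i : ℂ)
          * ∑ t ∈ range (d + 1), ζ ^ (t * (j + (d + 1 - k))) := by
        rw [Finset.sum_comm]
        exact Finset.sum_congr rfl fun j _ => by rw [Finset.mul_sum]
    _ = ((d : ℂ) + 1) * (krawtchouk d 2 k i : ℂ) := by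
        have hrs := root_sum (d+1) (Nat.succ_ne_zero d)
        push_cast at hrs
        rw [Finset.sum_eq_single k]
        · rw [hrs]
          have hdvd : (d + 1) ∣ (k + (d + 1 - k)) := by
            have : k + (d + 1 - k) = d + 1 := by omega
            rw [this]
          rw [if_pos hdvd]
          push_cast; ring
        · intro j hj hjk
          rw [hrs]
          rw [Finset.mem_range] at hj
          have : ¬ (d + 1) ∣ (j + (d + 1 - k)) := by
            intro hdvd
            have := Nat.eq_of_dvd_of_lt_two_mul (by omega) hdvd (by omega)
            omega
          rw [if_neg this, mul_zero]
        · intro h; exact absurd (Finset.mem_range.2 (Nat.lt_succ_of_le hk)) h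

lemma one_sub_exp_sq (θ : ℝ) :
    1 - (Complex.exp (θ * Complex.I)) ^ 2
      = -2 * (Real.sin θ : ℂ) * Complex.I * Complex.exp (θ * Complex.I) := by
  have h1 : Complex.exp (θ * Complex.I) * Complex.exp (-θ * Complex.I) = 1 := by
    rw [← Complex.exp_add]; ring_nf; exact Complex.exp_zero
  have hs : (Real.sin θ : ℂ) = Complex.sin θ := Complex.ofReal_sin θ
  rw [hs, Complex.sin]
  push_cast
  linear_combination (-1 : ℂ) * h1 + ((Complex.exp (-θ * Complex.I) - Complex.exp (θ * Complex.I)) * Complex.exp (θ * Complex.I)) * Complex.I_sq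

lemma one_add_exp_sq (θ : ℝ) :
    1 + (Complex.exp (θ * Complex.I)) ^ 2
      = 2 * (Real.cos θ : ℂ) * Complex.exp (θ * Complex.I) := by
  have h1 : Complex.exp (θ * Complex.I) * Complex.exp (-θ * Complex.I) = 1 := by
    rw [← Complex.exp_add]; ring_nf; exact Complex.exp_zero
  have hc : (Real.cos θ : ℂ) = Complex.cos θ := Complex.ofReal_cos θ
  rw [hc, Complex.cos]
  push_cast
  linear_combination -h1

lemma zeta_pow (d t : ℕ) :
    (Complex.exp (2 * Real.pi * Complex.I / (d+1))) ^ t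
      = (Complex.exp ((Real.pi * t / (d+1) : ℝ) * Complex.I)) ^ 2 := by
  rw [← Complex.exp_nat_mul, ← Complex.exp_nat_mul]
  congr 1
  have hd1 : ((d : ℂ) + 1) ≠ 0 := Nat.cast_add_one_ne_zero d
  push_cast
  field_simp

lemma z_pow_eq_one (d t : ℕ) :
    (Complex.exp ((Real.pi * t / (d+1) : ℝ) * Complex.I)) ^ (2*(d+1)) = 1 := by
  rw [← Complex.exp_nat_mul]
  have hd1 : ((d : ℂ) + 1) ≠ 0 := Nat.cast_add_one_ne_zero d
  have h : ((2*(d+1) : ℕ) : ℂ) * ((Real.pi * t / (d+1) : ℝ) * Complex.I)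
      = (t : ℤ) * (2 * (Real.pi : ℂ) * Complex.I) := by
    push_cast
    field_simp
  rw [h]
  exact_mod_cast Complex.exp_int_mul_two_pi_mul_I t

lemma hfact (d i a t : ℕ) (hia : i = 2*a) (hi : i ≤ d) :
    (1 - (Complex.exp (2 * Real.pi * Complex.I / (d+1))) ^ t) ^ i
      * (1 + (Complex.exp (2 * Real.pi * Complex.I / (d+1))) ^ t) ^ (d - i)
    = (-1) ^ a * ((2*(Real.sin (Real.pi * t / (d+1)) : ℂ))^i
        * (2*(Real.cos (Real.pi * t / (d+1)) : ℂ))^(d-i))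
      * (Complex.exp ((Real.pi * t / (d+1) : ℝ) * Complex.I)) ^ d := by
  set θ : ℝ := Real.pi * t / (d+1) with hθ
  set z : ℂ := Complex.exp ((θ : ℝ) * Complex.I) with hz
  rw [zeta_pow d t, ← hz, one_sub_exp_sq θ, one_add_exp_sq θ]
  rw [show (-2 * (Real.sin θ : ℂ) * Complex.I * z) = (-2 * (Real.sin θ : ℂ) * Complex.I) * z by ring,
    show (2 * (Real.cos θ : ℂ) * z) = (2 * (Real.cos θ : ℂ)) * z by ring,
    mul_pow (-2 * (Real.sin θ : ℂ) * Complex.I) z i,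
    mul_pow (2 * (Real.cos θ : ℂ)) z (d-i)]
  have hsin : (-2 * (Real.sin θ : ℂ) * Complex.I) ^ i
      = (-1)^a * (2 * (Real.sin θ : ℂ)) ^ i := by
    rw [hia, pow_mul, pow_mul]
    have hsq : (-2 * (Real.sin θ : ℂ) * Complex.I) ^ 2
        = -1 * (2 * (Real.sin θ : ℂ)) ^ 2 := by
      linear_combination (4 * (Real.sin θ : ℂ)^2) * Complex.I_sq
    rw [hsq, mul_pow]
  rw [hsin]
  have hzd : z ^ i * z ^ (d - i) = z ^ d := by
    rw [← pow_add]
    congr 1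
    omega
  calc (-1:ℂ) ^ a * (2 * (Real.sin θ:ℂ)) ^ i * z ^ i * ((2 * (Real.cos θ:ℂ)) ^ (d-i) * z ^ (d-i))
      = (-1:ℂ) ^ a * ((2 * (Real.sin θ:ℂ)) ^ i * (2 * (Real.cos θ:ℂ)) ^ (d-i)) * (z ^ i * z ^ (d-i)) := by
        ring
    _ = _ := by rw [hzd]

theorem binary_krawtchouk_max (d i k : ℕ) (hd : Even d) (hie : Even i)
    (hi : i ≤ d) (hk : k ≤ d) :
    |krawtchouk d 2 k i| ≤ |krawtchouk d 2 (d / 2) i| := by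
  obtain ⟨n, hn⟩ := hd
  obtain ⟨a, ha⟩ := hie
  have hia : i = 2 * a := by omega
  have hdn : d / 2 = n := by omega
  have hnd : n ≤ d := by omega
  set ζ : ℂ := Complex.exp (2 * Real.pi * Complex.I / (d+1)) with hζ
  set w : ℕ → ℝ := fun t =>
    (2*Real.sin (Real.pi * t / (d+1)))^i * (2*Real.cos (Real.pi * t / (d+1)))^(d-i) with hwdef
  have hdi : Even (d - i) := by
    rw [Nat.even_sub hi]
    constructor <;> intro <;> [exact ⟨a, by omega⟩; exact ⟨n, by omega⟩]
  have hw0 : ∀ t, 0 ≤ w t := by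
    intro t
    exact mul_nonneg (Even.pow_nonneg ⟨a, by omega⟩ _) (Even.pow_nonneg hdi _)
  have hwcast : ∀ t, ((w t : ℝ) : ℂ)
      = (2*(Real.sin (Real.pi * t / (d+1)) : ℂ))^i
        * (2*(Real.cos (Real.pi * t / (d+1)) : ℂ))^(d-i) := by
    intro t
    simp only [hwdef, Complex.ofReal_mul, Complex.ofReal_pow, Complex.ofReal_ofNat,
      Complex.ofReal_sin, Complex.ofReal_cos]
  -- center identity
  have hcenter : ∀ t, (1 - ζ ^ t) ^ i * (1 + ζ ^ t) ^ (d - i) * ζ ^ (t * (d + 1 - n))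
      = (-1) ^ a * ((w t : ℝ) : ℂ) := by
    intro t
    rw [hfact d i a t hia hi, hwcast t]
    have hz1 : ζ ^ (t * (d + 1 - n))
        = (Complex.exp ((Real.pi * t / (d+1) : ℝ) * Complex.I)) ^ (2 * (d + 1 - n)) := by
      rw [pow_mul, zeta_pow d t, ← pow_mul]
    rw [hz1, mul_assoc, ← pow_add]
    have he : d + 2 * (d + 1 - n) = 2 * (d + 1) := by omega
    rw [he, z_pow_eq_one d t]
    ring
  -- absolute value of each term
  have habs : ∀ t, ‖(1 - ζ ^ t) ^ i * (1 + ζ ^ t) ^ (d - i)‖ = w t := by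
    intro t
    rw [hfact d i a t hia hi, ← hwcast t]
    rw [norm_mul, norm_mul, norm_pow, norm_pow]
    simp only [norm_neg, norm_one, one_pow, Complex.norm_exp_ofReal_mul_I,
      Complex.norm_real, Real.norm_eq_abs]
    rw [abs_of_nonneg (hw0 t)]
    ring
  have hzabs : ‖ζ‖ = 1 := by
    have : ζ = Complex.exp ((2 * Real.pi / (d+1) : ℝ) * Complex.I) := by
      rw [hζ]; congr 1; push_cast; ring
    rw [this, Complex.norm_exp_ofReal_mul_I]
  -- the two inversion identities
  have h1 := kraw_inv d i k hi hk
  have h2 := kraw_inv d i n hi hnd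
  rw [← hζ] at h1 h2
  have hA : ‖((d : ℂ) + 1) * (krawtchouk d 2 n i : ℂ)‖ = ∑ t ∈ range (d+1), w t := by
    rw [← h2]
    have : ∑ t ∈ range (d + 1),
        (1 - ζ ^ t) ^ i * (1 + ζ ^ t) ^ (d - i) * ζ ^ (t * (d + 1 - n))
        = (-1) ^ a * ((∑ t ∈ range (d+1), w t : ℝ) : ℂ) := by
      rw [Finset.sum_congr rfl fun t _ => hcenter t, ← Finset.mul_sum]
      congr 1
      push_cast
      rfl
    rw [this, norm_mul, norm_pow, norm_neg, norm_one, one_pow, one_mul,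
      Complex.norm_real, Real.norm_eq_abs, abs_of_nonneg (Finset.sum_nonneg fun t _ => hw0 t)]
  have hB : ‖((d : ℂ) + 1) * (krawtchouk d 2 k i : ℂ)‖ ≤ ∑ t ∈ range (d+1), w t := by
    rw [← h1]
    refine le_trans (norm_sum_le _ _) ?_
    refine Finset.sum_le_sum fun t _ => ?_
    rw [norm_mul, norm_pow, hzabs, one_pow, mul_one, habs t]
  have hmain : ‖(krawtchouk d 2 k i : ℂ)‖ ≤ ‖(krawtchouk d 2 n i : ℂ)‖ := by
    have hle := le_trans hB (le_of_eq hA.symm)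
    rw [norm_mul, norm_mul] at hle
    have hpos : 0 < ‖(d : ℂ) + 1‖ := by
      have : ((d : ℂ) + 1) ≠ 0 := Nat.cast_add_one_ne_zero d
      exact norm_pos_iff.mpr this
    exact le_of_mul_le_mul_left hle hpos
  rw [hdn]
  rw [Complex.norm_intCast, Complex.norm_intCast] at hmain
  exact_mod_cast hmain
end

section
/- Let d be even, i even with 0 ≤ i ≤ d, and k an integer with 0 ≤ k ≤ d. Then the binary Krawtchouk polynomials with parameter d satisfy |K_i(k)| ≤ C(d, d/2) · C(d/2, i/2) / C(d, k). -/
/-!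
Write `d = 2n` and `i = 2a`. The generating function of `r ↦ K_r(i)` is
`f(z) = (1 - z)^i (1 + z)^(d - i)`, and on the unit circle
`(-1)^a z^(-n) f(z) = |1 - z|^i |1 + z|^(d - i) ≥ 0`. Extracting coefficients by averaging
over roots of unity then gives `|K_k(i)| ≤ |K_n(i)|` for every `k`. The symmetry
`C(d, k) K_i(k) = C(d, i) K_k(i)` turns this into
`C(d, k) |K_i(k)| ≤ C(d, n) |K_i(n)|`, and `K_i(n) = (-1)^a C(n, a)` because
`(1 - z)^n (1 + z)^n = (1 - z^2)^n`.
-/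

open Finset

open Polynomial
open scoped ComplexOrder ComplexConjugate

theorem Nat.choose_mul_choose_sub_comm (m p q : ℕ) :
    m.choose p * (m - p).choose q = m.choose q * (m - q).choose p := by
  have hp := Nat.choose_mul (n := m) (Nat.le_add_right p q)
  have hq := Nat.choose_mul (n := m) (Nat.le_add_left q p)
  rw [Nat.add_sub_cancel_left] at hp
  rw [Nat.add_sub_cancel] at hq
  rw [← hp, ← hq, Nat.choose_symm_add]

theorem Nat.choose_mul_choose_mul_choose_sub_comm {d i k j : ℕ} (hji : j ≤ i) (hjk : j ≤ k) :
    d.choose k * k.choose j * (d - k).choose (i - j)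
      = d.choose i * i.choose j * (d - i).choose (k - j) := by
  rw [Nat.choose_mul hjk, Nat.choose_mul hji, mul_assoc, mul_assoc,
    show d - k = d - j - (k - j) by omega, show d - i = d - j - (i - j) by omega,
    Nat.choose_mul_choose_sub_comm]

theorem Polynomial.coeff_one_sub_X_pow (R : Type*) [CommRing R] (n k : ℕ) :
    ((1 - X : R[X]) ^ n).coeff k = (-1) ^ k * n.choose k := by
  have h : (1 - X : R[X]) ^ n = C ((-1) ^ n) * (X + C (-1)) ^ n := by
    rw [C_pow, ← mul_pow, C_neg, C_1]; ring
  rw [h, coeff_C_mul, coeff_X_add_C_pow]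
  rcases le_or_gt k n with hkn | hkn
  · rw [← mul_assoc, ← pow_add, show n + (n - k) = 2 * (n - k) + k by omega, pow_add, pow_mul]
    norm_num
  · simp [Nat.choose_eq_zero_of_lt hkn]

theorem IsPrimitiveRoot.sum_zpow_pow {K : Type*} [Field K] {ζ : K} {N : ℕ}
    (hζ : IsPrimitiveRoot ζ N) (l : ℤ) :
    ∑ j ∈ range N, (ζ ^ l) ^ j = if (N : ℤ) ∣ l then (N : K) else 0 := by
  split_ifs with hl
  · simp [(hζ.zpow_eq_one_iff_dvd l).mpr hl]
  · have hN : (ζ ^ l) ^ N = 1 := by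
      rw [← zpow_natCast, ← zpow_mul, mul_comm, zpow_mul, zpow_natCast, hζ.pow_eq_one, one_zpow]
    rw [geom_sum_eq ((hζ.zpow_eq_one_iff_dvd l).not.mpr hl), hN, sub_self, zero_div]

theorem IsPrimitiveRoot.sum_inv_pow_mul_eval {K : Type*} [Field K] {ζ : K} {N : ℕ}
    (hζ : IsPrimitiveRoot ζ N) {p : K[X]} (hp : p.natDegree < N) {m : ℕ} (hm : m < N) :
    ∑ j ∈ range N, (ζ ^ j)⁻¹ ^ m * p.eval (ζ ^ j) = N * p.coeff m := by
  have hζ0 : ζ ≠ 0 := hζ.ne_zero (by omega)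
  have hterm (j r : ℕ) : (ζ ^ j)⁻¹ ^ m * (ζ ^ j) ^ r = (ζ ^ ((r : ℤ) - m)) ^ j := by
    rw [zpow_sub₀ hζ0, zpow_natCast, zpow_natCast, div_pow, ← pow_mul, ← pow_mul, inv_pow,
      ← pow_mul, ← pow_mul, mul_comm r, mul_comm m, div_eq_inv_mul]
  have hdvd (r : ℕ) (hr : r < N) : (N : ℤ) ∣ (r : ℤ) - m ↔ r = m := by
    refine ⟨fun h ↦ ?_, fun h ↦ by simp [h]⟩
    have := Int.eq_zero_of_abs_lt_dvd h (by rw [abs_lt]; omega)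
    omega
  simp_rw [eval_eq_sum_range' hp, mul_sum, mul_left_comm _ (p.coeff _), hterm]
  rw [sum_comm]
  simp_rw [← mul_sum, hζ.sum_zpow_pow]
  rw [sum_eq_single_of_mem m (mem_range.mpr hm) fun r hr hrm ↦ by
    rw [if_neg ((hdvd r (mem_range.mp hr)).not.mpr hrm), mul_zero]]
  simp [mul_comm]

theorem Polynomial.norm_coeff_le_of_nonneg_on_circle {p : ℂ[X]} {m : ℕ}
    (hp : ∀ z : ℂ, ‖z‖ = 1 → 0 ≤ z⁻¹ ^ m * p.eval z) (k : ℕ) :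
    ‖p.coeff k‖ ≤ ‖p.coeff m‖ := by
  set N := p.natDegree + m + k + 1
  have hζ := Complex.isPrimitiveRoot_exp N (by omega)
  set ζ := Complex.exp (2 * Real.pi * Complex.I / N)
  have hunit (j : ℕ) : ‖ζ ^ j‖ = 1 := by rw [norm_pow, hζ.norm'_eq_one (by omega), one_pow]
  have hsum (l : ℕ) (hl : l < N) :
      ‖∑ j ∈ range N, (ζ ^ j)⁻¹ ^ l * p.eval (ζ ^ j)‖ = N * ‖p.coeff l‖ := by
    rw [hζ.sum_inv_pow_mul_eval (by omega) hl, norm_mul, Complex.norm_natCast]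
  refine le_of_mul_le_mul_left ?_ (Nat.cast_pos.mpr (by omega : 0 < N))
  calc (N : ℝ) * ‖p.coeff k‖
      = ‖∑ j ∈ range N, (ζ ^ j)⁻¹ ^ k * p.eval (ζ ^ j)‖ := (hsum k (by omega)).symm
    _ ≤ ∑ j ∈ range N, ‖(ζ ^ j)⁻¹ ^ m * p.eval (ζ ^ j)‖ := by
      refine (norm_sum_le _ _).trans (sum_le_sum fun j _ ↦ ?_)
      simp only [norm_mul, norm_pow, norm_inv, hunit, inv_one, one_pow, one_mul, le_refl]
    _ = ‖∑ j ∈ range N, (ζ ^ j)⁻¹ ^ m * p.eval (ζ ^ j)‖ := by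
      conv_rhs => rw [sum_congr rfl fun j _ ↦ Complex.eq_coe_norm_of_nonneg (hp _ (hunit j))]
      rw [← Complex.ofReal_sum, Complex.norm_real, Real.norm_of_nonneg (by positivity)]
    _ = N * ‖p.coeff m‖ := hsum m (by omega)

namespace Complex

variable {z : ℂ}

theorem inv_mul_one_sub_sq_of_norm_eq_one (hz : ‖z‖ = 1) :
    z⁻¹ * (1 - z) ^ 2 = -(normSq (1 - z) : ℂ) := by
  have hzz : z * conj z = 1 := by
    rw [← inv_eq_conj hz, mul_inv_cancel₀ (by simp [← norm_ne_zero_iff, hz])]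
  rw [← mul_conj, map_sub, map_one, inv_eq_conj hz]
  linear_combination (z - 1) * hzz

theorem inv_mul_one_add_sq_of_norm_eq_one (hz : ‖z‖ = 1) :
    z⁻¹ * (1 + z) ^ 2 = (normSq (1 + z) : ℂ) := by
  have hzz : z * conj z = 1 := by
    rw [← inv_eq_conj hz, mul_inv_cancel₀ (by simp [← norm_ne_zero_iff, hz])]
  rw [← mul_conj, map_add, map_one, inv_eq_conj hz]
  linear_combination (1 + z) * hzz

theorem inv_pow_mul_one_sub_pow_mul_one_add_pow_nonneg (a b : ℕ) (hz : ‖z‖ = 1) :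
    0 ≤ z⁻¹ ^ (a + b) * ((-1) ^ a * ((1 - z) ^ (a + a) * (1 + z) ^ (b + b))) := by
  have h : z⁻¹ ^ (a + b) * ((-1) ^ a * ((1 - z) ^ (a + a) * (1 + z) ^ (b + b)))
      = (-(z⁻¹ * (1 - z) ^ 2)) ^ a * (z⁻¹ * (1 + z) ^ 2) ^ b := by
    rw [neg_eq_neg_one_mul (z⁻¹ * _), mul_pow, mul_pow, mul_pow, ← pow_mul, ← pow_mul, pow_add]
    ring
  rw [h, inv_mul_one_sub_sq_of_norm_eq_one hz, inv_mul_one_add_sq_of_norm_eq_one hz, neg_neg,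
    ← ofReal_pow, ← ofReal_pow, ← ofReal_mul, zero_le_real]
  exact mul_nonneg (pow_nonneg (normSq_nonneg _) _) (pow_nonneg (normSq_nonneg _) _)

end Complex

theorem coeff_one_sub_X_pow_mul_one_add_X_pow (R : Type*) [CommRing R] (d t r : ℕ) :
    ((1 - X) ^ t * (1 + X) ^ (d - t) : R[X]).coeff r = krawtchouk d 2 r t := by
  rw [coeff_mul, Nat.sum_antidiagonal_eq_sum_range_succ_mk, krawtchouk]
  push_cast
  refine sum_congr rfl fun j _ ↦ ?_
  rw [coeff_one_sub_X_pow, coeff_one_add_X_pow]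
  norm_num
  ring

theorem krawtchouk_two_eq_sum_range_min (d r t : ℕ) :
    krawtchouk d 2 r t
      = ∑ j ∈ range (min r t + 1), (-1) ^ j * (t.choose j : ℤ) * ((d - t).choose (r - j) : ℤ) := by
  rw [krawtchouk]
  refine (sum_subset (fun j hj ↦ ?_) fun j hj hjt ↦ ?_).symm.trans (sum_congr rfl fun j _ ↦ ?_)
  · simp only [mem_range] at hj ⊢; omega
  · simp only [mem_range] at hj hjt
    simp [Nat.choose_eq_zero_of_lt (show t < j by omega)]
  · norm_num; ring

theorem choose_mul_krawtchouk_two_comm (d i k : ℕ) :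
    (d.choose k : ℤ) * krawtchouk d 2 i k = d.choose i * krawtchouk d 2 k i := by
  simp_rw [krawtchouk_two_eq_sum_range_min, mul_sum, min_comm k i]
  refine sum_congr rfl fun j hj ↦ ?_
  have hjmin := mem_range_succ_iff.mp hj
  have h := congrArg (Nat.cast : ℕ → ℤ) <| Nat.choose_mul_choose_mul_choose_sub_comm (d := d)
    (le_min_iff.mp hjmin).1 (le_min_iff.mp hjmin).2
  push_cast at h
  linear_combination (-1) ^ j * h

theorem krawtchouk_two_central (n a : ℕ) :
    krawtchouk (n + n) 2 (a + a) n = (-1) ^ a * (n.choose a : ℤ) := by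
  have h : ((1 - X) ^ n * (1 + X) ^ (n + n - n) : ℤ[X]) = expand ℤ 2 ((1 - X) ^ n) := by
    rw [Nat.add_sub_cancel, ← mul_pow, map_pow, map_sub, map_one, expand_X]; ring
  rw [← Int.cast_id (n := krawtchouk _ _ _ _), ← coeff_one_sub_X_pow_mul_one_add_X_pow, h,
    coeff_expand two_pos, if_pos ⟨a, by ring⟩, show (a + a) / 2 = a by omega,
    coeff_one_sub_X_pow]

theorem abs_krawtchouk_two_le_central (a b k : ℕ) :
    |krawtchouk (a + b + (a + b)) 2 k (a + a)|
      ≤ |krawtchouk (a + b + (a + b)) 2 (a + b) (a + a)| := by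
  set p : ℂ[X] := C ((-1) ^ a) * ((1 - X) ^ (a + a) * (1 + X) ^ (a + b + (a + b) - (a + a)))
  have hcoeff (r : ℕ) : ‖p.coeff r‖ = |krawtchouk (a + b + (a + b)) 2 r (a + a)| := by
    rw [coeff_C_mul, coeff_one_sub_X_pow_mul_one_add_X_pow, norm_mul, norm_pow, norm_neg,
      norm_one, one_pow, one_mul, Complex.norm_intCast, Int.cast_abs]
  have hp (z : ℂ) (hz : ‖z‖ = 1) : 0 ≤ z⁻¹ ^ (a + b) * p.eval z := by
    simp only [p, eval_mul, eval_C, eval_pow, eval_sub, eval_add, eval_one, eval_X,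
      show a + b + (a + b) - (a + a) = b + b by omega]
    exact Complex.inv_pow_mul_one_sub_pow_mul_one_add_pow_nonneg a b hz
  exact_mod_cast (hcoeff k).symm.trans_le
    ((norm_coeff_le_of_nonneg_on_circle hp k).trans_eq (hcoeff _))

theorem binary_krawtchouk_bound (d i k : ℕ) (hd : Even d) (hie : Even i)
    (hi : i ≤ d) (hk : k ≤ d) :
    (|krawtchouk d 2 i k| : ℚ)
      ≤ (d.choose (d / 2) : ℚ) * ((d / 2).choose (i / 2) : ℚ) / (d.choose k : ℚ) := by
  obtain ⟨n, rfl⟩ := hd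
  obtain ⟨a, rfl⟩ := hie
  obtain ⟨b, rfl⟩ : ∃ b, n = a + b := ⟨n - a, by omega⟩
  rw [show (a + b + (a + b)) / 2 = a + b by omega, show (a + a) / 2 = a by omega,
    le_div_iff₀ (by exact_mod_cast Nat.choose_pos hk)]
  set d := a + b + (a + b)
  have hsymm (m : ℕ) : (d.choose m : ℤ) * |krawtchouk d 2 (a + a) m|
      = d.choose (a + a) * |krawtchouk d 2 m (a + a)| := by
    simpa [abs_mul] using congrArg abs (choose_mul_krawtchouk_two_comm d (a + a) m)
  have key : (d.choose k : ℤ) * |krawtchouk d 2 (a + a) k| ≤ d.choose (a + b) * (a + b).choose a :=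
    calc (d.choose k : ℤ) * |krawtchouk d 2 (a + a) k|
        = d.choose (a + a) * |krawtchouk d 2 k (a + a)| := hsymm k
      _ ≤ d.choose (a + a) * |krawtchouk d 2 (a + b) (a + a)| :=
        mul_le_mul_of_nonneg_left (abs_krawtchouk_two_le_central a b k) (by positivity)
      _ = d.choose (a + b) * |krawtchouk d 2 (a + a) (a + b)| := (hsymm (a + b)).symm
      _ = d.choose (a + b) * (a + b).choose a := by
        rw [krawtchouk_two_central, abs_mul, abs_neg_one_pow, one_mul, Nat.abs_cast]
  rw [mul_comm]
  exact_mod_cast key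
end

section
/- Let q be an odd prime power, E ⊂ F_q^d with d divisible by 4, and r even with 0 < r < d. Then the number λ_r of pairs in E × E at Hamming distance r satisfies λ_r ≥ q^{-d}|E|^2 (q-1)^r C(d, r) − 2 q^{r-1} (C(d, r)/d) C(d, d/2) C(d/2, d/4) |E|. -/
open Finset

-- product of factors each equal to c or -1 is bounded below
lemma prod_pm_bound {ι : Type*} (A : Finset ι) (v : ι → ℝ) (c : ℝ)
    (hc : 1 ≤ c) (hv : ∀ i ∈ A, v i = c ∨ v i = -1) :
    -(c ^ (A.card - 1)) ≤ ∏ i ∈ A, v i := by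
  classical
  have hc0 : (0:ℝ) < c := lt_of_lt_of_le one_pos hc
  set B := A.filter (fun i => v i = -1) with hB
  have hBA : B.card ≤ A.card := Finset.card_filter_le _ _
  have hsplit : ∏ i ∈ A, v i = (-1 : ℝ) ^ B.card * c ^ (A.card - B.card) := by
    rw [← Finset.prod_filter_mul_prod_filter_not A (fun i => v i = -1)]
    have h1 : ∏ i ∈ A.filter (fun i => v i = -1), v i = (-1 : ℝ) ^ B.card := by
      rw [Finset.prod_congr rfl (fun i hi => (Finset.mem_filter.1 hi).2)]
      rw [Finset.prod_const]
    have h2 : ∏ i ∈ A.filter (fun i => ¬ v i = -1), v i = c ^ (A.card - B.card) := by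
      rw [Finset.prod_congr rfl (fun i hi => ?_), Finset.prod_const]
      · congr 1
        have h3 := Finset.card_filter_add_card_filter_not (s := A)
          (p := fun i => v i = -1)
        have e : #(A.filter (fun i => v i = -1)) = B.card := by rw [hB]
        omega
      · rcases hv i (Finset.mem_filter.1 hi).1 with h | h
        · exact h
        · exact absurd h (Finset.mem_filter.1 hi).2
    rw [h1, h2]
  rcases Nat.eq_zero_or_pos B.card with h0 | h1
  · rw [hsplit, h0]
    simp only [pow_zero, one_mul]
    have : (0:ℝ) < c ^ (A.card - 0) := pow_pos hc0 _
    have h2 : (0:ℝ) < c ^ (A.card - 1) := pow_pos hc0 _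
    simp only [Nat.sub_zero] at this ⊢
    linarith
  · rw [hsplit]
    have hle : c ^ (A.card - B.card) ≤ c ^ (A.card - 1) := by
      apply pow_le_pow_right₀ hc
      omega
    rcases Nat.even_or_odd B.card with he | ho
    · rw [he.neg_one_pow, one_mul]
      have : (0:ℝ) < c ^ (A.card - B.card) := pow_pos hc0 _
      have h2 : (0:ℝ) < c ^ (A.card - 1) := pow_pos hc0 _
      linarith
    · rw [ho.neg_one_pow, neg_one_mul]
      exact neg_le_neg hle

noncomputable section

open Complex

variable {F : Type*} [AddCommGroup F] [Fintype F] [DecidableEq F] {d : ℕ}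

/-- product character on `Fin d → F` indexed by a tuple of characters. -/
def eChar (χ : Fin d → AddChar F ℂ) (x : Fin d → F) : ℂ := ∏ i, χ i (x i)

lemma eChar_add (χ : Fin d → AddChar F ℂ) (x y : Fin d → F) :
    eChar χ (x + y) = eChar χ x * eChar χ y := by
  simp only [eChar, Pi.add_apply, AddChar.map_add_eq_mul, Finset.prod_mul_distrib]

lemma conj_eChar (χ : Fin d → AddChar F ℂ) (x : Fin d → F) :
    (starRingEnd ℂ) (eChar χ x) = eChar χ (-x) := by
  simp only [eChar, map_prod]
  refine Finset.prod_congr rfl fun i _ => ?_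
  rw [← AddChar.inv_apply_eq_conj, ← AddChar.map_neg_eq_inv]
  rfl

lemma sum_eChar (x : Fin d → F) :
    ∑ χ : Fin d → AddChar F ℂ, eChar χ x
      = if x = 0 then ((Fintype.card F : ℂ)) ^ d else 0 := by
  classical
  have h1 : ∑ χ : Fin d → AddChar F ℂ, eChar χ x
      = ∏ i, ∑ ψ : AddChar F ℂ, ψ (x i) := by
    rw [Finset.prod_univ_sum (fun _ => (Finset.univ : Finset (AddChar F ℂ)))
      (fun i ψ => ψ (x i)), Fintype.piFinset_univ]
    rfl
  rw [h1]
  have h2 : ∀ i, ∑ ψ : AddChar F ℂ, ψ (x i)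
      = if x i = 0 then (Fintype.card F : ℂ) else 0 := fun i =>
    AddChar.sum_apply_eq_ite (x i)
  by_cases hx : x = 0
  · subst hx
    simp [h2]
  · obtain ⟨i, hi⟩ := Function.ne_iff.1 hx
    rw [if_neg hx]
    refine Finset.prod_eq_zero (Finset.mem_univ i) ?_
    rw [h2 i, if_neg (by simpa using hi)]

end

theorem distance_count_lower_bound (p l q d : ℕ) [Fact p.Prime] (hp : Odd p)
    (hq : q = p ^ l) (hl : 0 < l) (hd : 4 ∣ d)
    (F : Type*) [Field F] [Fintype F] [DecidableEq F] (hF : Fintype.card F = q)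
    (E : Finset (Fin d → F)) (r : ℕ) (hre : Even r) (hr0 : 0 < r) (hrd : r < d) :
    ((((E ×ˢ E).filter (fun z => hammingDist z.1 z.2 = r)).card : ℝ))
      ≥ ((q : ℝ) ^ d)⁻¹ * (E.card : ℝ) ^ 2 * ((q : ℝ) - 1) ^ r * (d.choose r : ℝ)
        - 2 * (q : ℝ) ^ (r - 1) * ((d.choose r : ℝ) / d)
            * (d.choose (d / 2) : ℝ) * ((d / 2).choose (d / 4) : ℝ) * E.card := by
  classical
  -- numeric preliminaries
  have hq3 : 3 ≤ q := by
    have hp2 : p.Prime := Fact.out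
    have hp3 : 3 ≤ p := by
      rcases hp with ⟨k, hk⟩
      have := hp2.two_le
      omega
    calc 3 ≤ p := hp3
    _ ≤ p ^ l := Nat.le_self_pow (by omega) p
    _ = q := hq.symm
  have hd4 : 4 ≤ d := by
    rcases hd with ⟨k, hk⟩
    omega
  have hq1R : (1:ℝ) ≤ (q:ℝ) - 1 := by
    have : (3:ℝ) ≤ (q:ℝ) := by exact_mod_cast hq3
    linarith
  have hqRpos : (0:ℝ) < (q:ℝ) := by linarith
  have hqdpos : (0:ℝ) < (q:ℝ) ^ d := pow_pos hqRpos d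
  set lam := ((E ×ˢ E).filter (fun z => hammingDist z.1 z.2 = r)).card with hlamdef
  set S : Finset (Fin d → F) := Finset.univ.filter (fun z => hammingNorm z = r) with hSdef
  set FE : (Fin d → AddChar F ℂ) → ℂ := fun χ => ∑ x ∈ E, eChar χ x with hFEdef
  have hconj : ∀ χ : Fin d → AddChar F ℂ,
      (starRingEnd ℂ) (FE χ) = ∑ y ∈ E, eChar χ (-y) := by
    intro χ
    rw [hFEdef, map_sum]
    exact Finset.sum_congr rfl fun y _ => conj_eChar χ y
  -- master identity
  have master : ∑ χ : Fin d → AddChar F ℂ,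
      (∑ z ∈ S, eChar χ z) * (FE χ * (starRingEnd ℂ) (FE χ))
      = (q:ℂ) ^ d * (lam : ℂ) := by
    have expand : ∀ χ : Fin d → AddChar F ℂ,
        (∑ z ∈ S, eChar χ z) * (FE χ * (starRingEnd ℂ) (FE χ))
        = ∑ x ∈ E, ∑ y ∈ E, ∑ z ∈ S, eChar χ (z + x - y) := by
      intro χ
      rw [hconj χ, hFEdef]
      calc (∑ z ∈ S, eChar χ z) * ((∑ x ∈ E, eChar χ x) * (∑ y ∈ E, eChar χ (-y)))
          = (∑ x ∈ E, ∑ y ∈ E, eChar χ x * eChar χ (-y)) * (∑ z ∈ S, eChar χ z) := by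
            rw [← Finset.sum_mul_sum]; ring
        _ = ∑ x ∈ E, ∑ y ∈ E, ∑ z ∈ S, eChar χ (z + x - y) := by
            rw [Finset.sum_mul]
            refine Finset.sum_congr rfl fun x _ => ?_
            rw [Finset.sum_mul]
            refine Finset.sum_congr rfl fun y _ => ?_
            rw [Finset.mul_sum]
            refine Finset.sum_congr rfl fun z _ => ?_
            rw [sub_eq_add_neg, add_assoc, eChar_add, eChar_add]
            ring
    rw [Finset.sum_congr rfl fun χ _ => expand χ]
    rw [Finset.sum_comm]
    have step1 : ∀ x ∈ E, (∑ χ : Fin d → AddChar F ℂ, ∑ y ∈ E, ∑ z ∈ S,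
        eChar χ (z + x - y)) = ∑ y ∈ E, (if hammingDist x y = r then ((q:ℂ))^d else 0) := by
      intro x _
      rw [Finset.sum_comm]
      refine Finset.sum_congr rfl fun y _ => ?_
      rw [Finset.sum_comm]
      have : ∀ z ∈ S, (∑ χ : Fin d → AddChar F ℂ, eChar χ (z + x - y))
          = if z = y - x then ((q:ℂ))^d else 0 := by
        intro z _
        rw [sum_eChar, hF]
        congr 1
        exact propext ⟨fun h => eq_sub_of_add_eq (sub_eq_zero.1 h),
          fun h => by rw [h]; abel⟩
      rw [Finset.sum_congr rfl this, Finset.sum_ite_eq' S (y - x) (fun _ => ((q:ℂ))^d)]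
      congr 1
      rw [hSdef]
      simp only [Finset.mem_filter, Finset.mem_univ, true_and]
      rw [hammingDist_eq_hammingNorm, neg_add_eq_sub]
    rw [Finset.sum_congr rfl step1]
    have : (q:ℂ)^d * ∑ x ∈ E, ∑ y ∈ E, (if hammingDist x y = r then (1:ℂ) else 0)
        = ∑ x ∈ E, ∑ y ∈ E, (if hammingDist x y = r then ((q:ℂ))^d else 0) := by
      rw [Finset.mul_sum]
      refine Finset.sum_congr rfl fun x _ => ?_
      rw [Finset.mul_sum]
      refine Finset.sum_congr rfl fun y _ => ?_
      rw [mul_ite, mul_one, mul_zero]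
    rw [← this]
    congr 1
    rw [← Finset.sum_product']
    rw [Finset.sum_boole]
  -- Parseval
  have parseval : ∑ χ : Fin d → AddChar F ℂ, FE χ * (starRingEnd ℂ) (FE χ)
      = (q:ℂ) ^ d * (E.card : ℂ) := by
    have expand : ∀ χ : Fin d → AddChar F ℂ,
        FE χ * (starRingEnd ℂ) (FE χ) = ∑ x ∈ E, ∑ y ∈ E, eChar χ (x - y) := by
      intro χ
      rw [hconj χ, hFEdef, Finset.sum_mul_sum]
      refine Finset.sum_congr rfl fun x _ => Finset.sum_congr rfl fun y _ => ?_
      rw [sub_eq_add_neg, eChar_add]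
    rw [Finset.sum_congr rfl fun χ _ => expand χ]
    rw [Finset.sum_comm]
    have step1 : ∀ x ∈ E, (∑ χ : Fin d → AddChar F ℂ, ∑ y ∈ E, eChar χ (x - y))
        = ((q:ℂ))^d := by
      intro x hx
      rw [Finset.sum_comm]
      have : ∀ y ∈ E, (∑ χ : Fin d → AddChar F ℂ, eChar χ (x - y))
          = if y = x then ((q:ℂ))^d else 0 := by
        intro y _
        rw [sum_eChar, hF]
        congr 1
        exact propext ⟨fun h => (sub_eq_zero.1 h).symm, fun h => by rw [h, sub_self]⟩
      rw [Finset.sum_congr rfl this, Finset.sum_ite_eq' E x (fun _ => ((q:ℂ))^d),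
        if_pos hx]
    rw [Finset.sum_congr rfl step1, Finset.sum_const, nsmul_eq_mul, mul_comm]
  -- Sphere Fourier coefficient: explicit real formula
  set w : (Fin d → AddChar F ℂ) → Fin d → ℝ :=
    fun χ i => if χ i = 0 then ((q:ℝ) - 1) else -1 with hwdef
  set cc : (Fin d → AddChar F ℂ) → ℝ :=
    fun χ => ∑ A ∈ Finset.powersetCard r (Finset.univ : Finset (Fin d)),
      ∏ i ∈ A, w χ i with hccdef
  have hsphere : ∀ χ : Fin d → AddChar F ℂ,
      (∑ z ∈ S, eChar χ z) = ((cc χ : ℝ) : ℂ) := by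
    intro χ
    have hmaps : ∀ z ∈ S, (Finset.univ.filter (fun i => z i ≠ 0))
        ∈ Finset.powersetCard r (Finset.univ : Finset (Fin d)) := by
      intro z hz
      rw [Finset.mem_powersetCard]
      refine ⟨Finset.filter_subset _ _, ?_⟩
      have : hammingNorm z = r := by
        rw [hSdef] at hz
        exact (Finset.mem_filter.1 hz).2
      exact this
    rw [← Finset.sum_fiberwise_of_maps_to hmaps (eChar χ)]
    have per_A : ∀ A ∈ Finset.powersetCard r (Finset.univ : Finset (Fin d)),
        (∑ z ∈ S.filter (fun z => Finset.univ.filter (fun i => z i ≠ 0) = A), eChar χ z)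
          = ((∏ i ∈ A, w χ i : ℝ) : ℂ) := by
      intro A hA
      obtain ⟨-, hAcard⟩ := Finset.mem_powersetCard.1 hA
      have hfib : S.filter (fun z => Finset.univ.filter (fun i => z i ≠ 0) = A)
          = Fintype.piFinset (fun i => if i ∈ A then (Finset.univ : Finset F).erase 0
              else {0}) := by
        ext z
        rw [Finset.mem_filter, Fintype.mem_piFinset, hSdef, Finset.mem_filter]
        constructor
        · rintro ⟨⟨-, hnorm⟩, hsupp⟩ i
          by_cases hiA : i ∈ A
          · rw [if_pos hiA]
            have hz : z i ≠ 0 := by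
              have := hsupp ▸ hiA
              exact (Finset.mem_filter.1 this).2
            exact Finset.mem_erase.2 ⟨hz, Finset.mem_univ _⟩
          · rw [if_neg hiA]
            have hz : ¬ z i ≠ 0 := fun h =>
              hiA (hsupp ▸ Finset.mem_filter.2 ⟨Finset.mem_univ _, h⟩)
            simp [not_not.1 hz]
        · intro h
          have hsupp : Finset.univ.filter (fun i => z i ≠ 0) = A := by
            ext i
            simp only [Finset.mem_filter, Finset.mem_univ, true_and]
            constructor
            · intro hzi
              by_contra hiA
              have := h i
              rw [if_neg hiA] at this
              exact hzi (Finset.mem_singleton.1 this)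
            · intro hiA
              have := h i
              rw [if_pos hiA] at this
              exact (Finset.mem_erase.1 this).1
          refine ⟨⟨Finset.mem_univ _, ?_⟩, hsupp⟩
          show hammingNorm z = r
          rw [show hammingNorm z = #(Finset.univ.filter (fun i => z i ≠ 0)) from rfl,
            hsupp, hAcard]
      rw [hfib]
      have hfactor : (∑ z ∈ Fintype.piFinset (fun i => if i ∈ A
            then (Finset.univ : Finset F).erase 0 else {0}), eChar χ z)
          = ∏ i, ∑ v ∈ (if i ∈ A then (Finset.univ : Finset F).erase 0 else {0}), χ i v := by
        rw [Finset.prod_univ_sum]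
        rfl
      rw [hfactor]
      have hterm : ∀ i : Fin d, (∑ v ∈ (if i ∈ A then (Finset.univ : Finset F).erase 0
            else {0}), χ i v) = if i ∈ A then ((w χ i : ℝ) : ℂ) else 1 := by
        intro i
        by_cases hiA : i ∈ A
        · rw [if_pos hiA, if_pos hiA]
          rw [Finset.sum_erase_eq_sub (Finset.mem_univ (0:F)), AddChar.sum_eq_ite, hF,
            AddChar.map_zero_eq_one]
          by_cases hχ : χ i = 0
          · rw [if_pos hχ]
            simp only [hwdef, if_pos hχ]
            push_cast
            ring
          · rw [if_neg hχ]
            simp only [hwdef, if_neg hχ]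
            push_cast
            ring
        · rw [if_neg hiA, if_neg hiA, Finset.sum_singleton, AddChar.map_zero_eq_one]
      rw [Finset.prod_congr rfl fun i _ => hterm i, Finset.prod_ite_mem,
        Finset.univ_inter, Complex.ofReal_prod]
    rw [Finset.sum_congr rfl per_A, hccdef, Complex.ofReal_sum]
  -- real versions
  have Hreal : ∑ χ : Fin d → AddChar F ℂ, cc χ * Complex.normSq (FE χ)
      = (q:ℝ)^d * (lam : ℝ) := by
    have hL : (∑ χ : Fin d → AddChar F ℂ,
        (∑ z ∈ S, eChar χ z) * (FE χ * (starRingEnd ℂ) (FE χ)))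
        = ((∑ χ : Fin d → AddChar F ℂ, cc χ * Complex.normSq (FE χ) : ℝ) : ℂ) := by
      rw [Complex.ofReal_sum]
      refine Finset.sum_congr rfl fun χ _ => ?_
      rw [hsphere χ, Complex.mul_conj, ← Complex.ofReal_mul]
    rw [hL] at master
    exact_mod_cast master
  have HP : ∑ χ : Fin d → AddChar F ℂ, Complex.normSq (FE χ)
      = (q:ℝ)^d * (E.card : ℝ) := by
    have hL : (∑ χ : Fin d → AddChar F ℂ, FE χ * (starRingEnd ℂ) (FE χ))
        = ((∑ χ : Fin d → AddChar F ℂ, Complex.normSq (FE χ) : ℝ) : ℂ) := by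
      rw [Complex.ofReal_sum]
      exact Finset.sum_congr rfl fun χ _ => Complex.mul_conj _
    rw [hL] at parseval
    exact_mod_cast parseval
  -- value at the trivial character
  have hFE0 : FE (0 : Fin d → AddChar F ℂ) = (E.card : ℂ) := by
    simp [hFEdef, eChar]
  have hn0 : Complex.normSq (FE (0 : Fin d → AddChar F ℂ)) = (E.card : ℝ)^2 := by
    rw [hFE0, Complex.normSq_natCast]
    push_cast
    ring
  have hc0 : cc (0 : Fin d → AddChar F ℂ) = (d.choose r : ℝ) * ((q:ℝ) - 1)^r := by
    simp only [hccdef, hwdef, Pi.zero_apply, eq_self_iff_true, if_true]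
    have : ∀ A ∈ Finset.powersetCard r (Finset.univ : Finset (Fin d)),
        (∏ _i ∈ A, ((q:ℝ)-1)) = ((q:ℝ)-1)^r := fun A hA => by
      rw [Finset.prod_const, (Finset.mem_powersetCard.1 hA).2]
    rw [Finset.sum_congr rfl this, Finset.sum_const, Finset.card_powersetCard,
      Finset.card_univ, Fintype.card_fin, nsmul_eq_mul]
  -- uniform lower bound for cc
  have hlow : ∀ χ : Fin d → AddChar F ℂ,
      -(((q:ℝ)-1)^(r-1) * (d.choose r : ℝ)) ≤ cc χ := by
    intro χ
    have hterm : ∀ A ∈ Finset.powersetCard r (Finset.univ : Finset (Fin d)),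
        -(((q:ℝ)-1)^(r-1)) ≤ ∏ i ∈ A, w χ i := by
      intro A hA
      have hAcard := (Finset.mem_powersetCard.1 hA).2
      have := prod_pm_bound A (w χ) ((q:ℝ)-1) hq1R (fun i _ => by
        simp only [hwdef]
        by_cases hχ : χ i = 0
        · left; rw [if_pos hχ]
        · right; rw [if_neg hχ])
      rwa [hAcard] at this
    have hsum := Finset.card_nsmul_le_sum _ _ _ hterm
    rw [Finset.card_powersetCard, Finset.card_univ, Fintype.card_fin, nsmul_eq_mul] at hsum
    calc -(((q:ℝ)-1)^(r-1) * (d.choose r : ℝ))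
        = (d.choose r : ℝ) * -(((q:ℝ)-1)^(r-1)) := by ring
      _ ≤ ∑ A ∈ Finset.powersetCard r (Finset.univ : Finset (Fin d)), ∏ i ∈ A, w χ i := hsum
      _ = cc χ := by rw [hccdef]
  -- assembly
  set K0 : ℝ := ((q:ℝ)-1)^(r-1) * (d.choose r : ℝ) with hK0def
  have hK0nn : 0 ≤ K0 := by
    rw [hK0def]
    exact mul_nonneg (pow_nonneg (by linarith) _) (Nat.cast_nonneg _)
  have hsplit : (q:ℝ)^d * (lam:ℝ) = cc (0 : Fin d → AddChar F ℂ)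
        * Complex.normSq (FE (0 : Fin d → AddChar F ℂ))
      + ∑ χ ∈ Finset.univ.erase (0 : Fin d → AddChar F ℂ), cc χ * Complex.normSq (FE χ) := by
    rw [← Hreal]
    exact (Finset.add_sum_erase Finset.univ (fun χ => cc χ * Complex.normSq (FE χ))
      (Finset.mem_univ (0 : Fin d → AddChar F ℂ))).symm
  have h1 : -K0 * (∑ χ ∈ Finset.univ.erase (0 : Fin d → AddChar F ℂ), Complex.normSq (FE χ))
      ≤ ∑ χ ∈ Finset.univ.erase (0 : Fin d → AddChar F ℂ), cc χ * Complex.normSq (FE χ) := by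
    rw [Finset.mul_sum]
    exact Finset.sum_le_sum fun χ _ => mul_le_mul_of_nonneg_right
      (by have := hlow χ; rw [hK0def]; linarith) (Complex.normSq_nonneg _)
  have h2 : ∑ χ ∈ Finset.univ.erase (0 : Fin d → AddChar F ℂ), Complex.normSq (FE χ)
      ≤ (q:ℝ)^d * (E.card:ℝ) := by
    rw [← HP]
    exact Finset.sum_le_sum_of_subset_of_nonneg (Finset.erase_subset _ _)
      (fun χ _ _ => Complex.normSq_nonneg _)
  have h3 : -K0 * ((q:ℝ)^d * (E.card:ℝ)) ≤ -K0 * (∑ χ ∈ Finset.univ.erase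
        (0 : Fin d → AddChar F ℂ), Complex.normSq (FE χ)) :=
    mul_le_mul_of_nonpos_left h2 (neg_nonpos.2 hK0nn)
  have H : (d.choose r : ℝ) * ((q:ℝ)-1)^r * (E.card:ℝ)^2 - K0 * ((q:ℝ)^d * (E.card:ℝ))
      ≤ (q:ℝ)^d * (lam:ℝ) := by
    rw [hsplit, hc0, hn0]
    linarith [h1, h3]
  -- constant comparison
  have hdc2 : (d:ℝ) ≤ 2 * (d.choose (d/2) : ℝ) * ((d/2).choose (d/4) : ℝ) := by
    have a1 : d ≤ d.choose (d/2) := by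
      have := Nat.choose_le_middle 1 d
      rwa [Nat.choose_one_right] at this
    have a2 : 1 ≤ (d/2).choose (d/4) := Nat.choose_pos (by omega)
    have a3 : 2 * d * 1 ≤ 2 * d.choose (d/2) * (d/2).choose (d/4) :=
      Nat.mul_le_mul (Nat.mul_le_mul (le_refl 2) a1) a2
    have hn : d ≤ 2 * d.choose (d/2) * (d/2).choose (d/4) := by omega
    exact_mod_cast hn
  have hdRpos : (0:ℝ) < (d:ℝ) := by
    have : 0 < d := by omega
    exact_mod_cast this
  have hKle : K0 ≤ 2 * (q:ℝ)^(r-1) * ((d.choose r : ℝ)/(d:ℝ))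
      * (d.choose (d/2) : ℝ) * ((d/2).choose (d/4) : ℝ) := by
    have hqq : ((q:ℝ)-1)^(r-1) ≤ (q:ℝ)^(r-1) :=
      pow_le_pow_left₀ (by linarith) (by linarith) _
    have hfac : (1:ℝ) ≤ 2 * (d.choose (d/2):ℝ) * ((d/2).choose (d/4):ℝ) / (d:ℝ) :=
      (one_le_div hdRpos).2 hdc2
    calc K0 ≤ (q:ℝ)^(r-1) * (d.choose r : ℝ) := by
          rw [hK0def]
          exact mul_le_mul_of_nonneg_right hqq (Nat.cast_nonneg _)
      _ = (q:ℝ)^(r-1) * (d.choose r : ℝ) * 1 := (mul_one _).symm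
      _ ≤ (q:ℝ)^(r-1) * (d.choose r : ℝ)
            * (2 * (d.choose (d/2):ℝ) * ((d/2).choose (d/4):ℝ) / (d:ℝ)) :=
          mul_le_mul_of_nonneg_left hfac (by positivity)
      _ = 2 * (q:ℝ)^(r-1) * ((d.choose r : ℝ)/(d:ℝ))
            * (d.choose (d/2) : ℝ) * ((d/2).choose (d/4) : ℝ) := by
          field_simp
  -- finish
  have key : (q:ℝ)^d * (((q : ℝ) ^ d)⁻¹ * (E.card : ℝ) ^ 2 * ((q : ℝ) - 1) ^ r * (d.choose r : ℝ)
        - 2 * (q : ℝ) ^ (r - 1) * ((d.choose r : ℝ) / d)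
            * (d.choose (d / 2) : ℝ) * ((d / 2).choose (d / 4) : ℝ) * E.card)
      ≤ (q:ℝ)^d * (lam:ℝ) := by
    have e1 : (q:ℝ)^d * ((q:ℝ)^d)⁻¹ = 1 := mul_inv_cancel₀ (ne_of_gt hqdpos)
    have hbig : K0 * ((q:ℝ)^d * (E.card:ℝ))
        ≤ (q:ℝ)^d * (2 * (q : ℝ) ^ (r - 1) * ((d.choose r : ℝ) / d)
            * (d.choose (d / 2) : ℝ) * ((d / 2).choose (d / 4) : ℝ) * E.card) := by
      have hmul := mul_le_mul_of_nonneg_right hKle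
        (mul_nonneg (le_of_lt hqdpos) (Nat.cast_nonneg E.card))
      calc K0 * ((q:ℝ)^d * (E.card:ℝ))
          ≤ (2 * (q : ℝ) ^ (r - 1) * ((d.choose r : ℝ) / d)
            * (d.choose (d / 2) : ℝ) * ((d / 2).choose (d / 4) : ℝ))
              * ((q:ℝ)^d * (E.card:ℝ)) := hmul
        _ = (q:ℝ)^d * (2 * (q : ℝ) ^ (r - 1) * ((d.choose r : ℝ) / d)
            * (d.choose (d / 2) : ℝ) * ((d / 2).choose (d / 4) : ℝ) * E.card) := by ring
    have expand : (q:ℝ)^d * (((q : ℝ) ^ d)⁻¹ * (E.card : ℝ) ^ 2 * ((q : ℝ) - 1) ^ r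
          * (d.choose r : ℝ)
        - 2 * (q : ℝ) ^ (r - 1) * ((d.choose r : ℝ) / d)
            * (d.choose (d / 2) : ℝ) * ((d / 2).choose (d / 4) : ℝ) * E.card)
        = (d.choose r:ℝ) * ((q:ℝ)-1)^r * (E.card:ℝ)^2
          - (q:ℝ)^d * (2 * (q : ℝ) ^ (r - 1) * ((d.choose r : ℝ) / d)
            * (d.choose (d / 2) : ℝ) * ((d / 2).choose (d / 4) : ℝ) * E.card) := by
      rw [mul_sub]
      congr 1
      calc (q:ℝ)^d * (((q : ℝ) ^ d)⁻¹ * (E.card : ℝ) ^ 2 * ((q : ℝ) - 1) ^ r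
            * (d.choose r : ℝ))
          = ((q:ℝ)^d * ((q:ℝ)^d)⁻¹) * ((E.card : ℝ) ^ 2 * ((q : ℝ) - 1) ^ r
            * (d.choose r : ℝ)) := by ring
        _ = (d.choose r:ℝ) * ((q:ℝ)-1)^r * (E.card:ℝ)^2 := by rw [e1]; ring
    rw [expand]
    linarith [H, hbig]
  exact le_of_mul_le_mul_left key hqdpos
end
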